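/- Let H be a real Hilbert space and δ > 0. Let μ : [0, ∞) → ℝ be continuously differentiable with μ(s) ≥ 0 and μ'(s) + δ·μ(s) ≤ 0 for all s ≥ 0. Let η : [0, ∞) → H be continuously differentiable with η(0) = 0, suppose the functions s ↦ μ(s)·⟨η(s), η'(s)⟩ and s ↦ μ(s)·‖η(s)‖² are integrable on [0, ∞), and suppose μ(s)·‖η(s)‖² → 0 as s → ∞. Then ∫₀^∞ μ(s)·⟨η(s), η'(s)⟩ ds ≥ (δ/2) · ∫₀^∞ μ(s)·‖η(s)‖² ds. -/

import Mathlib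

open MeasureTheory Filter Set
open scoped InnerProductSpace

/-!
Put `g = μ ‖η‖²`. Then `g' = μ' ‖η‖² + 2 μ ⟪η, η'⟫ ≤ -δ g + 2 μ ⟪η, η'⟫` by the dissipation
condition, so integrating over `[0, T]` and using `g 0 = 0 ≤ g T` gives
`δ ∫₀ᵀ g ≤ 2 ∫₀ᵀ μ ⟪η, η'⟫`; letting `T → ∞` gives the estimate.
-/

theorem HasDerivAt.mul_norm_sq {H : Type*} [NormedAddCommGroup H] [InnerProductSpace ℝ H]
    {μ : ℝ → ℝ} {η : ℝ → H} {m s : ℝ} {v : H} (hμ : HasDerivAt μ m s) (hη : HasDerivAt η v s) :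
    HasDerivAt (fun t => μ t * ‖η t‖ ^ 2) (m * ‖η s‖ ^ 2 + 2 * (μ s * ⟪η s, v⟫_ℝ)) s :=
  (hμ.fun_mul hη.norm_sq).congr_deriv (by ring)

/-- Only an upper bound on `g'` enters, so `g'` need not be integrable. -/
theorem sub_add_mul_integral_le_of_deriv_add_mul_le {g g' f : ℝ → ℝ} {a b δ : ℝ} (hab : a ≤ b)
    (hcont : ContinuousOn g (Icc a b)) (hderiv : ∀ x ∈ Ioo a b, HasDerivAt g (g' x) x)
    (hg : IntegrableOn g (Icc a b)) (hf : IntegrableOn f (Icc a b))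
    (hle : ∀ x ∈ Ioo a b, g' x + δ * g x ≤ f x) :
    g b - g a + δ * ∫ x in a..b, g x ≤ ∫ x in a..b, f x := by
  have hsub := intervalIntegral.sub_le_integral_of_hasDeriv_right_of_le hab hcont
    (φ := fun x => f x - δ * g x) (fun x hx => (hderiv x hx).hasDerivWithinAt)
    (hf.sub (hg.const_mul δ))
    (fun x hx => by linarith [hle x hx])
  have hfi := (intervalIntegrable_iff_integrableOn_Icc_of_le hab).mpr hf
  have hgi := (intervalIntegrable_iff_integrableOn_Icc_of_le hab).mpr hg
  rw [intervalIntegral.integral_sub hfi (hgi.const_mul δ),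
    intervalIntegral.integral_const_mul] at hsub
  linarith

theorem integral_Ioi_le_of_forall_intervalIntegral_le {f g : ℝ → ℝ} {a : ℝ}
    (hf : IntegrableOn f (Ioi a)) (hg : IntegrableOn g (Ioi a))
    (hle : ∀ b, a ≤ b → ∫ x in a..b, f x ≤ ∫ x in a..b, g x) :
    ∫ x in Ioi a, f x ≤ ∫ x in Ioi a, g x :=
  le_of_tendsto_of_tendsto (intervalIntegral_tendsto_integral_Ioi a hf tendsto_id)
    (intervalIntegral_tendsto_integral_Ioi a hg tendsto_id) ((eventually_ge_atTop a).mono hle)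

theorem memory_kernel_inner_estimate_general
    {H : Type*} [NormedAddCommGroup H] [InnerProductSpace ℝ H]
    (δ : ℝ)
    (μ μ' : ℝ → ℝ)
    (hμderiv : ∀ s ∈ Set.Ici (0:ℝ), HasDerivAt μ (μ' s) s)
    (hμnonneg : ∀ s ∈ Set.Ici (0:ℝ), 0 ≤ μ s)
    (hμdiss : ∀ s ∈ Set.Ici (0:ℝ), μ' s + δ * μ s ≤ 0)
    (η η' : ℝ → H)
    (hηderiv : ∀ s ∈ Set.Ici (0:ℝ), HasDerivAt η (η' s) s)
    (hη0 : η 0 = 0)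
    (hint1 : IntegrableOn (fun s => μ s * (inner ℝ (η s) (η' s) : ℝ)) (Set.Ici 0))
    (hint2 : IntegrableOn (fun s => μ s * ‖η s‖ ^ 2) (Set.Ici 0)) :
    (∫ s in Set.Ici (0:ℝ), μ s * (inner ℝ (η s) (η' s) : ℝ)) ≥
      (δ / 2) * ∫ s in Set.Ici (0:ℝ), μ s * ‖η s‖ ^ 2 := by
  have hg : ∀ s ∈ Ici (0:ℝ), HasDerivAt (fun t => μ t * ‖η t‖ ^ 2)
      (μ' s * ‖η s‖ ^ 2 + 2 * (μ s * ⟪η s, η' s⟫_ℝ)) s :=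
    fun s hs => (hμderiv s hs).mul_norm_sq (hηderiv s hs)
  have hfinite : ∀ T, 0 ≤ T → ∫ s in (0:ℝ)..T, δ / 2 * (μ s * ‖η s‖ ^ 2) ≤
      ∫ s in (0:ℝ)..T, μ s * ⟪η s, η' s⟫_ℝ := by
    intro T hT
    have hIcc : Icc 0 T ⊆ Ici (0:ℝ) := Icc_subset_Ici_self
    have hineq := sub_add_mul_integral_le_of_deriv_add_mul_le (δ := δ) hT
      (fun s hs => (hg s hs.1).continuousAt.continuousWithinAt) (fun s hs => hg s hs.1.le)
      (hint2.mono_set hIcc) ((hint1.mono_set hIcc).const_mul 2) fun s hs => by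
        linarith [mul_nonpos_of_nonpos_of_nonneg (hμdiss s hs.1.le) (sq_nonneg ‖η s‖)]
    have hgT : 0 ≤ μ T * ‖η T‖ ^ 2 := mul_nonneg (hμnonneg T hT) (sq_nonneg _)
    rw [intervalIntegral.integral_const_mul]
    rw [hη0, norm_zero, zero_pow two_ne_zero, mul_zero, sub_zero,
      intervalIntegral.integral_const_mul] at hineq
    linarith
  rw [integral_Ici_eq_integral_Ioi, integral_Ici_eq_integral_Ioi, ← integral_const_mul]
  exact integral_Ioi_le_of_forall_intervalIntegral_le
    ((hint2.mono_set Ioi_subset_Ici_self).const_mul _) (hint1.mono_set Ioi_subset_Ici_self) hfinite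

/-- Hilbert-space form of the memory-kernel lemma. If `μ ≥ 0` is C¹ on
`[0,∞)` with `μ' + δμ ≤ 0`, and `η : [0,∞) → H` is C¹ with `η 0 = 0`, the functions
`s ↦ μ(s)⟨η(s), η'(s)⟩` and `s ↦ μ(s)‖η(s)‖²` are integrable on `[0,∞)`, and
`μ(s)‖η(s)‖² → 0` at infinity, then
`∫₀^∞ μ(s)⟨η(s), η'(s)⟩ ds ≥ (δ/2) ∫₀^∞ μ(s)‖η(s)‖² ds`. -/
theorem memory_kernel_inner_estimate
    {H : Type*} [NormedAddCommGroup H] [InnerProductSpace ℝ H]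
    (δ : ℝ) (hδ : 0 < δ)
    (μ μ' : ℝ → ℝ)
    (hμderiv : ∀ s ∈ Set.Ici (0:ℝ), HasDerivAt μ (μ' s) s)
    (hμ'cont : ContinuousOn μ' (Set.Ici 0))
    (hμnonneg : ∀ s ∈ Set.Ici (0:ℝ), 0 ≤ μ s)
    (hμdiss : ∀ s ∈ Set.Ici (0:ℝ), μ' s + δ * μ s ≤ 0)
    (η η' : ℝ → H)
    (hηderiv : ∀ s ∈ Set.Ici (0:ℝ), HasDerivAt η (η' s) s)
    (hη'cont : ContinuousOn η' (Set.Ici 0))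
    (hη0 : η 0 = 0)
    (hint1 : IntegrableOn (fun s => μ s * (inner ℝ (η s) (η' s) : ℝ)) (Set.Ici 0))
    (hint2 : IntegrableOn (fun s => μ s * ‖η s‖ ^ 2) (Set.Ici 0))
    (hlim : Tendsto (fun s => μ s * ‖η s‖ ^ 2) atTop (nhds 0)) :
    (∫ s in Set.Ici (0:ℝ), μ s * (inner ℝ (η s) (η' s) : ℝ)) ≥
      (δ / 2) * ∫ s in Set.Ici (0:ℝ), μ s * ‖η s‖ ^ 2 :=
  memory_kernel_inner_estimate_general δ μ μ' hμderiv hμnonneg hμdiss η η' hηderiv hη0 hint1 hint2
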